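/- arXiv:2104.13170 — 3 statements merged into one kernel-verified Lean document; each statement's English description precedes it below -/
import Mathlib

section
/- Let 𝕂 = ℚ(√d) be a real quadratic field of class number one with d > 1 squarefree, d ≡ 3 (mod 4), and fix 𝒞 ∈ ℕ. Then there is a constant c = c(𝒞, 𝕂) such that for all N ≥ 2 and all nonzero ideals 𝔫 of 𝒪 with 𝒩(𝔫) ≤ N, one has Ψ(𝔫) ≤ c · (𝒩(𝔫)/N)^𝒞. -/
open NumberField

open scoped Classical

/-- The weight `f(x) = (exp(−πx²) − exp(−2πx²))^𝒞`. -/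
noncomputable def fwt (C : ℕ) (x : ℝ) : ℝ :=
  (Real.exp (-Real.pi * x^2) - Real.exp (-2 * Real.pi * x^2)) ^ C

/-- The smooth weight `Ψ(𝔫) = ∑_{k ∈ 𝒪, (k) = 𝔫} f(σ₁(k)/√N) f(σ₂(k)/√N)`,
where `σ₁` is the inclusion `K ⊆ ℝ` and `σ₂` the second real embedding. -/
noncomputable def PsiW (K : Subfield ℝ) [NumberField K] (σ₂ : K →+* ℝ) (C : ℕ) (N : ℝ)
    (n : Ideal (𝓞 K)) : ℝ :=
  ∑' k : 𝓞 K, if Ideal.span {k} = n then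
    fwt C (((k : K) : ℝ) / Real.sqrt N) * fwt C (σ₂ (k : K) / Real.sqrt N) else 0

/-!
Every generator `k` of `𝔫` has `|σ₁(k) σ₂(k)| = 𝒩(𝔫)`, and `f(x) ≤ min(1, πx²)^𝒞`, so its term
is at most `π^𝒞 (𝒩(𝔫)/N)^𝒞 min(ρ, ρ⁻¹)^𝒞` with `ρ = σ₁(k)²/𝒩(𝔫)`. Two generators differ by a
unit `u`; as there are only finitely many integers all of whose conjugates are bounded, there is
`b > 1` with `u² ≥ b` or `u² ≤ b⁻¹` for every unit `u ≠ ±1`. Hence generators of the same sign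
have distinct values of `⌊log_b ρ⌋`, and the sum is dominated by twice `∑_{m ∈ ℤ} b^(-𝒞|m|)`.
-/

open Real Filter Topology

theorem exp_neg_pi_mul_sq_mem_Ioc (x : ℝ) : exp (-π * x ^ 2) ∈ Set.Ioc 0 1 :=
  ⟨exp_pos _, exp_le_one_iff.2 (by nlinarith [pi_pos, sq_nonneg x])⟩

theorem fwt_eq (C : ℕ) (x : ℝ) :
    fwt C x = (exp (-π * x ^ 2) * (1 - exp (-π * x ^ 2))) ^ C := by
  rw [fwt, mul_one_sub, ← exp_add]
  ring_nf

theorem fwt_nonneg (C : ℕ) (x : ℝ) : 0 ≤ fwt C x := by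
  obtain ⟨h0, h1⟩ := exp_neg_pi_mul_sq_mem_Ioc x
  rw [fwt_eq]
  exact pow_nonneg (by nlinarith) C

theorem fwt_le_one (C : ℕ) (x : ℝ) : fwt C x ≤ 1 := by
  obtain ⟨h0, h1⟩ := exp_neg_pi_mul_sq_mem_Ioc x
  rw [fwt_eq]
  exact pow_le_one₀ (by nlinarith) (by nlinarith)

theorem fwt_le_pow (C : ℕ) (x : ℝ) : fwt C x ≤ (π * x ^ 2) ^ C := by
  obtain ⟨h0, h1⟩ := exp_neg_pi_mul_sq_mem_Ioc x
  have h2 : 1 - π * x ^ 2 ≤ exp (-π * x ^ 2) := by simpa using one_sub_le_exp_neg (π * x ^ 2)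
  rw [fwt_eq]
  exact pow_le_pow_left₀ (by nlinarith) (by nlinarith) C

theorem fwt_mul_fwt_le (C : ℕ) (x y : ℝ) :
    fwt C x * fwt C y ≤ (π * min (x ^ 2) (y ^ 2)) ^ C := by
  rcases le_total (x ^ 2) (y ^ 2) with h | h
  · rw [min_eq_left h]
    simpa using mul_le_mul (fwt_le_pow C x) (fwt_le_one C y) (fwt_nonneg C y) (by positivity)
  · rw [min_eq_right h]
    simpa using mul_le_mul (fwt_le_one C x) (fwt_le_pow C y) (fwt_nonneg C y) zero_le_one

theorem zpow_floor_logb_le {b x : ℝ} (hb : 1 < b) (hx : 0 < x) : b ^ ⌊logb b x⌋ ≤ x := by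
  rw [← rpow_intCast, ← le_logb_iff_rpow_le hb hx]
  exact Int.floor_le _

theorem lt_zpow_floor_logb_add_one {b x : ℝ} (hb : 1 < b) (hx : 0 < x) :
    x < b ^ (⌊logb b x⌋ + 1) := by
  rw [← rpow_intCast, ← logb_lt_iff_lt_rpow hb hx]
  push_cast
  exact Int.lt_floor_add_one _

theorem min_le_mul_inv_pow_natAbs_floor_logb {b x : ℝ} (hb : 1 < b) (hx : 0 < x) :
    min x x⁻¹ ≤ b * b⁻¹ ^ ⌊logb b x⌋.natAbs := by
  obtain ⟨j, hj | hj⟩ := Int.eq_nat_or_neg ⌊logb b x⌋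
  · have hle := zpow_floor_logb_le hb hx
    rw [hj, zpow_natCast] at hle
    rw [hj, Int.natAbs_natCast, inv_pow]
    calc min x x⁻¹ ≤ x⁻¹ := min_le_right _ _
      _ ≤ (b ^ j)⁻¹ := inv_anti₀ (by positivity) hle
      _ ≤ b * (b ^ j)⁻¹ := le_mul_of_one_le_left (by positivity) hb.le
  · have hlt := lt_zpow_floor_logb_add_one hb hx
    rw [hj, zpow_add₀ (one_pos.trans hb).ne', zpow_neg, zpow_one, zpow_natCast] at hlt
    rw [hj, Int.natAbs_neg, Int.natAbs_natCast, inv_pow, mul_comm]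
    exact (min_le_left _ _).trans hlt.le

theorem min_sq_div_sqrt_eq {a a' M N : ℝ} (hN : 0 < N) (hM : 0 < M) (h : |a * a'| = M) :
    min ((a / √N) ^ 2) ((a' / √N) ^ 2) = M / N * min (a ^ 2 / M) (a ^ 2 / M)⁻¹ := by
  have ha : a ≠ 0 := by rintro rfl; simp at h; linarith
  have h2 : (a * a') ^ 2 = M ^ 2 := by rw [← sq_abs, h]
  rw [mul_min_of_nonneg _ _ (by positivity), div_pow, div_pow, sq_sqrt hN.le]
  congr 1
  · field_simp
  · field_simp
    nlinarith [h2]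

theorem fwt_mul_fwt_le_of_abs_mul_eq (C : ℕ) {a a' b M N : ℝ} (hb : 1 < b) (hN : 0 < N)
    (hM : 0 < M) (h : |a * a'| = M) :
    fwt C (a / √N) * fwt C (a' / √N) ≤
      π ^ C * b ^ C * (M / N) ^ C * (b⁻¹ ^ C) ^ ⌊logb b (a ^ 2 / M)⌋.natAbs := by
  have hρ : 0 < a ^ 2 / M := by
    have ha : a ≠ 0 := by rintro rfl; simp at h; linarith
    positivity
  calc fwt C (a / √N) * fwt C (a' / √N)
      ≤ (π * (M / N * min (a ^ 2 / M) (a ^ 2 / M)⁻¹)) ^ C := by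
        rw [← min_sq_div_sqrt_eq hN hM h]
        exact fwt_mul_fwt_le C _ _
    _ ≤ (π * (M / N * (b * b⁻¹ ^ ⌊logb b (a ^ 2 / M)⌋.natAbs))) ^ C := by
        gcongr
        exact min_le_mul_inv_pow_natAbs_floor_logb hb hρ
    _ = _ := by ring

theorem NumberField.exists_one_lt_forall_norm_le_one (K : Type*) [Field K] [NumberField K] :
    ∃ b : ℝ, 1 < b ∧ ∀ x : 𝓞 K, (∀ φ : K →+* ℂ, ‖φ x‖ < b) → ∀ φ : K →+* ℂ, ‖φ x‖ ≤ 1 := by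
  set S := {x : K | IsIntegral ℤ x ∧ ∀ φ : K →+* ℂ, ‖φ x‖ ≤ 2}
  have hev : ∀ᶠ b in 𝓝[>] (1 : ℝ),
      b < 2 ∧ ∀ x ∈ S, ∀ φ : K →+* ℂ, 1 < ‖φ x‖ → b < ‖φ x‖ := by
    refine (eventually_nhdsWithin_of_eventually_nhds (eventually_lt_nhds one_lt_two)).and <|
      (Embeddings.finite_of_norm_le K ℂ 2).eventually_all.2 fun x _ => eventually_all.2 fun φ => ?_
    by_cases h : 1 < ‖φ x‖
    · exact eventually_nhdsWithin_of_eventually_nhds ((eventually_lt_nhds h).mono fun _ hb _ => hb)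
    · exact Eventually.of_forall fun _ h' => absurd h' h
  obtain ⟨b, ⟨hb2, hbS⟩, hb1⟩ := (hev.and self_mem_nhdsWithin).exists
  refine ⟨b, hb1, fun x hx φ => not_lt.1 fun h => (hx φ).not_gt ?_⟩
  exact hbS x ⟨x.isIntegral_coe, fun ψ => (hx ψ).le.trans hb2.le⟩ φ h

namespace RealQuadratic

variable {K : Subfield ℝ} {σ₂ : K →+* ℝ}

variable (K) in
def UnitSqGap (b : ℝ) : Prop :=
  ∀ u : (𝓞 K)ˣ, u ≠ 1 → u ≠ -1 → b ≤ (((u : 𝓞 K) : K) : ℝ) ^ 2 ∨ (((u : 𝓞 K) : K) : ℝ) ^ 2 ≤ b⁻¹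

theorem floor_logb_ne_of_span_eq {b M : ℝ} (hb : 1 < b) (hM : 0 < M) (hgap : UnitSqGap K b)
    {k k' : 𝓞 K} (hk : ((k : K) : ℝ) ≠ 0) (hspan : Ideal.span {k} = Ideal.span {k'})
    (hne : k ≠ k') (hsign : 0 < ((k : K) : ℝ) ↔ 0 < ((k' : K) : ℝ)) :
    ⌊logb b (((k : K) : ℝ) ^ 2 / M)⌋ ≠ ⌊logb b (((k' : K) : ℝ) ^ 2 / M)⌋ := by
  obtain ⟨u, rfl⟩ := Ideal.span_singleton_eq_span_singleton.1 hspan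
  set x : ℝ := (((u : 𝓞 K) : K) : ℝ)
  have hu1 : u ≠ 1 := by rintro rfl; simp at hne
  have hum1 : u ≠ -1 := by
    rintro rfl
    push_cast at hsign
    rcases hk.lt_or_gt with h | h
    · linarith [hsign.2 (by linarith)]
    · linarith [hsign.1 h]
  have hx : x ≠ 0 := by simp [x]
  have hlog : logb b ((((k * u : 𝓞 K) : K) : ℝ) ^ 2 / M) =
      logb b (((k : K) : ℝ) ^ 2 / M) + logb b (x ^ 2) := by
    have hku : (((k * u : 𝓞 K) : K) : ℝ) = ((k : K) : ℝ) * x := by simp [x]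
    rw [← logb_mul (by positivity) (by positivity), hku]
    congr 1
    ring
  intro hfloor
  have hlt := Int.abs_sub_lt_one_of_floor_eq_floor hfloor
  rw [hlog, sub_add_cancel_left, abs_neg, abs_lt] at hlt
  rcases hgap u hu1 hum1 with h | h
  · have := logb_le_logb_of_le hb (one_pos.trans hb) h
    rw [logb_self_eq_one hb] at this
    linarith
  · have := logb_le_logb_of_le hb (by positivity) h
    rw [logb_inv, logb_self_eq_one hb] at this
    linarith

theorem sum_pow_natAbs_floor_logb_le {b M q : ℝ} (hb : 1 < b) (hM : 0 < M) (hq0 : 0 ≤ q)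
    (hq : Summable fun m : ℤ => q ^ m.natAbs) (hgap : UnitSqGap K b)
    {n : Ideal (𝓞 K)} {F : Finset (𝓞 K)} (hF : ∀ k ∈ F, Ideal.span {k} = n)
    (hF0 : ∀ k ∈ F, ((k : K) : ℝ) ≠ 0) :
    ∑ k ∈ F, q ^ ⌊logb b (((k : K) : ℝ) ^ 2 / M)⌋.natAbs ≤ 2 * ∑' m : ℤ, q ^ m.natAbs := by
  have hsameSign : ∀ G ⊆ F, (∀ k ∈ G, ∀ k' ∈ G, (0 < ((k : K) : ℝ) ↔ 0 < ((k' : K) : ℝ))) →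
      ∑ k ∈ G, q ^ ⌊logb b (((k : K) : ℝ) ^ 2 / M)⌋.natAbs ≤ ∑' m : ℤ, q ^ m.natAbs := by
    intro G hGF hG
    have hinj : Set.InjOn (fun k : 𝓞 K => ⌊logb b (((k : K) : ℝ) ^ 2 / M)⌋) G := by
      intro k hk k' hk' h
      by_contra hne
      exact floor_logb_ne_of_span_eq hb hM hgap (hF0 k (hGF hk))
        ((hF k (hGF hk)).trans (hF k' (hGF hk')).symm) hne (hG k hk k' hk') h
    rw [← Finset.sum_image (f := fun m : ℤ => q ^ m.natAbs) hinj]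
    exact hq.sum_le_tsum _ fun _ _ => pow_nonneg hq0 _
  rw [← Finset.sum_filter_add_sum_filter_not F (fun k : 𝓞 K => 0 < ((k : K) : ℝ)), two_mul]
  gcongr
  · refine hsameSign _ (Finset.filter_subset _ _) fun k hk k' hk' => ?_
    exact iff_of_true (Finset.mem_filter.1 hk).2 (Finset.mem_filter.1 hk').2
  · refine hsameSign _ (Finset.filter_subset _ _) fun k hk k' hk' => ?_
    exact iff_of_false (Finset.mem_filter.1 hk).2 (Finset.mem_filter.1 hk').2

theorem ofRealHom_comp_subtype_ne (hσ₂ : σ₂ ≠ K.subtype) :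
    Complex.ofRealHom.comp K.subtype ≠ Complex.ofRealHom.comp σ₂ := fun h =>
  hσ₂ (RingHom.ext fun x => Complex.ofReal_injective (RingHom.congr_fun h x).symm)

variable [NumberField K]

theorem univ_ringHom_complex (hdeg : Module.finrank ℚ K = 2) (hσ₂ : σ₂ ≠ K.subtype) :
    (Finset.univ : Finset (K →+* ℂ)) =
      {Complex.ofRealHom.comp K.subtype, Complex.ofRealHom.comp σ₂} := by
  refine (Finset.eq_univ_of_card _ ?_).symm
  rw [Finset.card_pair (ofRealHom_comp_subtype_ne hσ₂), Embeddings.card, hdeg]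

theorem coe_norm_eq_mul (hdeg : Module.finrank ℚ K = 2) (hσ₂ : σ₂ ≠ K.subtype) (x : K) :
    (Algebra.norm ℚ x : ℝ) = x * σ₂ x := by
  have h := Algebra.norm_eq_prod_embeddings ℚ ℂ x
  rw [← Fintype.prod_equiv (RingHom.equivRatAlgHom K ℂ) (fun φ => φ x) _ fun _ => rfl,
    univ_ringHom_complex hdeg hσ₂, Finset.prod_pair (ofRealHom_comp_subtype_ne hσ₂)] at h
  simp only [RingHom.comp_apply, Complex.ofRealHom_eq_coe, eq_ratCast] at h
  exact_mod_cast h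

theorem abs_mul_eq_absNorm (hdeg : Module.finrank ℚ K = 2) (hσ₂ : σ₂ ≠ K.subtype) (k : 𝓞 K) :
    |(k : K) * σ₂ k| = (Ideal.absNorm (Ideal.span {k}) : ℝ) := by
  rw [← coe_norm_eq_mul hdeg hσ₂, Ideal.absNorm_span_singleton, ← Algebra.coe_norm_int k]
  push_cast
  rw [Nat.cast_natAbs, Int.cast_abs]

theorem abs_mul_unit_eq_one (hdeg : Module.finrank ℚ K = 2) (hσ₂ : σ₂ ≠ K.subtype)
    (u : (𝓞 K)ˣ) : |((u : 𝓞 K) : K) * σ₂ (u : 𝓞 K)| = 1 := by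
  rw [abs_mul_eq_absNorm hdeg hσ₂, Ideal.span_singleton_eq_top.2 u.isUnit, Ideal.absNorm_top,
    Nat.cast_one]

theorem exists_unitSqGap (hdeg : Module.finrank ℚ K = 2) (hσ₂ : σ₂ ≠ K.subtype) :
    ∃ b : ℝ, 1 < b ∧ UnitSqGap K b := by
  obtain ⟨l, hl, hgap⟩ := NumberField.exists_one_lt_forall_norm_le_one K
  refine ⟨l ^ 2, one_lt_pow₀ hl two_ne_zero, fun u hu1 hum1 => ?_⟩
  set x : ℝ := (((u : 𝓞 K) : K) : ℝ)
  set y : ℝ := σ₂ (u : 𝓞 K)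
  have hxy : x ^ 2 * y ^ 2 = 1 := by
    rw [← mul_pow, ← sq_abs, abs_mul_unit_eq_one hdeg hσ₂ u, one_pow]
  by_contra! h
  have hl0 : 0 ≤ l := zero_le_one.trans hl.le
  have hx : |x| < l := abs_lt_of_sq_lt_sq h.1 hl0
  have hy : |y| < l := by
    refine abs_lt_of_sq_lt_sq ?_ hl0
    rw [eq_inv_of_mul_eq_one_right hxy,
      inv_lt_comm₀ ((by positivity : (0 : ℝ) < (l ^ 2)⁻¹).trans h.2) (by positivity)]
    exact h.2
  have hsmall : ∀ φ : K →+* ℂ, ‖φ (u : 𝓞 K)‖ ≤ 1 := by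
    refine hgap u fun φ => ?_
    have hφ : φ ∈ (Finset.univ : Finset (K →+* ℂ)) := Finset.mem_univ φ
    rw [univ_ringHom_complex hdeg hσ₂, Finset.mem_insert, Finset.mem_singleton] at hφ
    rcases hφ with rfl | rfl <;> simpa
  have hx1 : x ^ 2 = 1 := by
    have h1 : x ^ 2 ≤ 1 := by simpa using hsmall (Complex.ofRealHom.comp K.subtype)
    have h2 : y ^ 2 ≤ 1 := by simpa using hsmall (Complex.ofRealHom.comp σ₂)
    nlinarith [sq_nonneg x, sq_nonneg y]
  rcases sq_eq_one_iff.1 hx1 with hx | hx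
  · exact hu1 (Units.ext (RingOfIntegers.ext (Subtype.ext (by push_cast; exact hx))))
  · exact hum1 (Units.ext (RingOfIntegers.ext (Subtype.ext (by push_cast; exact hx))))

theorem psiW_le (hdeg : Module.finrank ℚ K = 2) (hσ₂ : σ₂ ≠ K.subtype) {b : ℝ} (hb : 1 < b)
    (hgap : UnitSqGap K b) {C : ℕ} (hC : Summable fun m : ℤ => (b⁻¹ ^ C) ^ m.natAbs)
    {N : ℝ} (hN : 0 < N) {n : Ideal (𝓞 K)} (hn : n ≠ ⊥) :
    PsiW K σ₂ C N n ≤ π ^ C * b ^ C * (2 * ∑' m : ℤ, (b⁻¹ ^ C) ^ m.natAbs) *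
      ((Ideal.absNorm n : ℝ) / N) ^ C := by
  set M : ℝ := (Ideal.absNorm n : ℝ)
  have hM : 0 < M := by
    simpa [M, Nat.pos_iff_ne_zero, Ideal.absNorm_eq_zero_iff] using hn
  refine tsum_le_of_sum_le' (by positivity) fun s => ?_
  rw [← Finset.sum_filter]
  set F := s.filter fun k => Ideal.span {k} = n
  have hF : ∀ k ∈ F, Ideal.span {k} = n := fun k hk => (Finset.mem_filter.1 hk).2
  have habs : ∀ k ∈ F, |((k : K) : ℝ) * σ₂ k| = M := fun k hk => by
    rw [abs_mul_eq_absNorm hdeg hσ₂, hF k hk]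
  have hF0 : ∀ k ∈ F, ((k : K) : ℝ) ≠ 0 := fun k hk h0 => by
    have := habs k hk
    rw [h0, zero_mul, abs_zero] at this
    exact hM.ne this
  calc ∑ k ∈ F, fwt C (((k : K) : ℝ) / √N) * fwt C (σ₂ k / √N)
      ≤ ∑ k ∈ F, π ^ C * b ^ C * (M / N) ^ C *
          (b⁻¹ ^ C) ^ ⌊logb b (((k : K) : ℝ) ^ 2 / M)⌋.natAbs :=
        Finset.sum_le_sum fun k hk => fwt_mul_fwt_le_of_abs_mul_eq C hb hN hM (habs k hk)
    _ = π ^ C * b ^ C * (M / N) ^ C *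
          ∑ k ∈ F, (b⁻¹ ^ C) ^ ⌊logb b (((k : K) : ℝ) ^ 2 / M)⌋.natAbs := by
        rw [Finset.mul_sum]
    _ ≤ π ^ C * b ^ C * (M / N) ^ C * (2 * ∑' m : ℤ, (b⁻¹ ^ C) ^ m.natAbs) := by
        gcongr
        exact sum_pow_natAbs_floor_logb_le hb hM (by positivity) hC hgap hF hF0
    _ = _ := by ring

end RealQuadratic

open RealQuadratic in
theorem psi_small_norm_bound_general
    (d : ℕ) (hd : 1 < d)
    (K : Subfield ℝ) [NumberField K]
    (hdeg : Module.finrank ℚ K = 2)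
    (sq : 𝓞 K) (hsq : ((sq : K) : ℝ) = Real.sqrt d)
    (σ₂ : K →+* ℝ) (hσ₂ : σ₂ (sq : K) = -Real.sqrt d)
    (C : ℕ) (hC : 0 < C) :
    ∃ c : ℝ, ∀ N : ℝ, 2 ≤ N → ∀ n : Ideal (𝓞 K), n ≠ ⊥ → (Ideal.absNorm n : ℝ) ≤ N →
      PsiW K σ₂ C N n ≤ c * ((Ideal.absNorm n : ℝ) / N) ^ C := by
  have hconj : σ₂ ≠ K.subtype := fun h => by
    have hd0 : 0 < √(d : ℝ) := sqrt_pos.2 (by exact_mod_cast one_pos.trans hd)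
    have : σ₂ (sq : K) = ((sq : K) : ℝ) := by rw [h]; rfl
    rw [hσ₂, hsq] at this
    linarith
  obtain ⟨b, hb, hgap⟩ := exists_unitSqGap hdeg hconj
  have hq : b⁻¹ ^ C < 1 := pow_lt_one₀ (by positivity) (inv_lt_one_of_one_lt₀ hb) hC.ne'
  have hsum : Summable fun m : ℤ => (b⁻¹ ^ C) ^ m.natAbs := by
    apply Summable.of_nat_of_neg <;> simpa using summable_geometric_of_lt_one (by positivity) hq
  exact ⟨_, fun N hN n hn _ => psiW_le hdeg hconj hb hgap hsum (by linarith) hn⟩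

/-- **Bound for `Ψ` at ideals of small norm:** for all `N ≥ 2` and nonzero ideals `𝔫`
with `𝒩(𝔫) ≤ N`, one has `Ψ(𝔫) ≤ c (𝒩(𝔫)/N)^𝒞`. -/
theorem psi_small_norm_bound
    (d : ℕ) (hd : 1 < d) (hdsq : Squarefree d) (hd4 : d % 4 = 3)
    (K : Subfield ℝ) [NumberField K]
    (hdeg : Module.finrank ℚ K = 2)
    (sq : 𝓞 K) (hsq : ((sq : K) : ℝ) = Real.sqrt d)
    (hclass : NumberField.classNumber K = 1)
    (σ₂ : K →+* ℝ) (hσ₂ : σ₂ (sq : K) = -Real.sqrt d)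
    (C : ℕ) (hC : 0 < C) :
    ∃ c : ℝ, ∀ N : ℝ, 2 ≤ N → ∀ n : Ideal (𝓞 K), n ≠ ⊥ → (Ideal.absNorm n : ℝ) ≤ N →
      PsiW K σ₂ C N n ≤ c * ((Ideal.absNorm n : ℝ) / N) ^ C :=
  psi_small_norm_bound_general d hd K hdeg sq hsq σ₂ hσ₂ C hC
end

section
/- Let 𝕂 be an imaginary quadratic number field of class number one, and for N ≥ 3 define W : ℐ → ℝ by W(𝔫) := π·exp(−π·𝒩(𝔫)/N). Fix ξ ∈ (0,1). Then there is a constant c = c(ξ, 𝕂) such that for all N ≥ 3 and all nonzero ideals 𝔯 with 𝒩(𝔯) ≤ N/2, setting Ñ := N·(log N)^ξ, one has ∑_{𝔞∈ℐ, 𝒩(𝔞𝔯) > Ñ} W(𝔞𝔯) ≤ c · (N/𝒩(𝔯)) · exp(−(log N)^{ξ/2}). -/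
/-
Class number one makes every ideal principal, `𝔞 = (α)`, and in an imaginary quadratic field
`𝒩(α) = |σ α|²` for a complex embedding `σ`. On the tail `𝒩(𝔞𝔯) > N (log N)^ξ`, half of the
Gaussian `exp(-π 𝒩(𝔞𝔯)/N)` is at most `exp(-(π/2) (log N)^ξ)`, and the other half sums to a
theta series `∑_α exp(-t |σ α|²)` with `t = π 𝒩(𝔯)/(2N) ≤ 1`. Since `𝒩(α - β) ≥ 1`, the
points `σ(𝒪)` are `1`-separated in `ℂ`, so a disc of area `x` contains `O(x)` of them, and Abel
summation turns this count into the bound `O(1/t) = O(N/𝒩(𝔯))` for the theta series.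
-/

open NumberField

open scoped Classical

open NumberField.InfinitePlace Finset Real MeasureTheory

lemma card_le_of_norm_le_of_one_le_dist (G : Finset ℂ) {R : ℝ} (hR : 0 ≤ R)
    (hG : ∀ z ∈ G, ‖z‖ ≤ R) (hsep : (G : Set ℂ).Pairwise fun z w => 1 ≤ dist z w) :
    (#G : ℝ) ≤ (2 * R + 1) ^ 2 := by
  have hdisj : (G : Set ℂ).PairwiseDisjoint fun z => Metric.ball z (1 / 2) :=
    fun z hz w hw hzw => Metric.ball_disjoint_ball (by linarith [hsep hz hw hzw])
  have hsub : ⋃ z ∈ G, Metric.ball z (1 / 2) ⊆ Metric.ball 0 (R + 1 / 2) := by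
    refine Set.iUnion₂_subset fun z hz => Metric.ball_subset_ball' ?_
    rw [dist_zero_right]
    linarith [hG z hz]
  have hball (a : ℂ) {r : ℝ} (hr : 0 ≤ r) : volume.real (Metric.ball a r) = π * r ^ 2 := by
    simp [measureReal_def, ENNReal.toReal_ofReal hr, mul_comm]
  have hvol := measureReal_mono (μ := volume) hsub
  rw [measureReal_biUnion_finset hdisj fun _ _ => measurableSet_ball,
    Finset.sum_congr rfl fun z _ => hball z (by norm_num : (0 : ℝ) ≤ 1 / 2),
    hball 0 (by linarith), Finset.sum_const, nsmul_eq_mul] at hvol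
  nlinarith [pi_pos]

lemma hasSum_ite_le_geometric {x : ℝ} (hx0 : 0 ≤ x) (hx1 : x < 1) (k : ℕ) :
    HasSum (fun m : ℕ => if k ≤ m then x ^ m else 0) (x ^ k / (1 - x)) := by
  rw [← hasSum_nat_add_iff' k,
    Finset.sum_eq_zero fun m hm => if_neg (by simpa using hm), sub_zero]
  simpa [pow_add, mul_comm, div_eq_mul_inv] using
    (hasSum_geometric_of_lt_one hx0 hx1).mul_left (x ^ k)

lemma sum_pow_le_of_card_le {ι : Type*} (G : Finset ι) (f : ι → ℕ) {C x : ℝ} (hx0 : 0 ≤ x)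
    (hx1 : x < 1) (hcard : ∀ m : ℕ, (#{i ∈ G | f i ≤ m} : ℝ) ≤ C * (m + 1)) :
    ∑ i ∈ G, x ^ f i ≤ C / (1 - x) := by
  have hx : 0 < 1 - x := by linarith
  -- Abel summation: `x ^ k = (1 - x) ∑_{m ≥ k} x ^ m`.
  have hlayer : HasSum (fun m : ℕ => (#{i ∈ G | f i ≤ m} : ℝ) * x ^ m)
      (∑ i ∈ G, x ^ f i / (1 - x)) := by
    convert hasSum_sum fun i _ => hasSum_ite_le_geometric hx0 hx1 (f i) using 2 with m
    rw [Finset.sum_ite, Finset.sum_const_zero, add_zero, Finset.sum_const, nsmul_eq_mul]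
  have hbound : HasSum (fun m : ℕ => C * ((m + 1) * x ^ m)) (C * (1 / (1 - x) ^ 2)) := by
    simpa using (hasSum_choose_mul_geometric_of_norm_lt_one 1
      (by rwa [norm_of_nonneg hx0] : ‖x‖ < 1)).mul_left C
  have := hasSum_le (fun m => ?_) hlayer hbound
  · rw [← Finset.sum_div, div_le_iff₀ hx] at this
    calc ∑ i ∈ G, x ^ f i ≤ C * (1 / (1 - x) ^ 2) * (1 - x) := this
      _ = C / (1 - x) := by field_simp
  · rw [← mul_assoc]
    exact mul_le_mul_of_nonneg_right (hcard m) (pow_nonneg hx0 m)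

lemma exp_neg_pi_mul_div_le_of_mul_lt {N L y : ℝ} (hN : 0 < N) (h : N * L < y) :
    rexp (-π * y / N) ≤ rexp (-(π / 2 * L)) * rexp (-(π * y / (2 * N))) := by
  rw [← exp_add, exp_le_exp]
  have hL : L ≤ y / N := by rw [le_div_iff₀ hN]; linarith
  have heq : -π * y / N = -(π / 2 * (y / N)) + -(π * y / (2 * N)) := by field_simp; ring
  rw [heq]
  nlinarith [pi_pos]

lemma exp_neg_pi_half_mul_rpow_le {u ξ : ℝ} (hu : 1 ≤ u) (hξ : 0 ≤ ξ) :
    rexp (-(π / 2 * u ^ ξ)) ≤ rexp (-u ^ (ξ / 2)) := by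
  rw [exp_le_exp, neg_le_neg_iff]
  calc u ^ (ξ / 2) ≤ u ^ ξ := rpow_le_rpow_of_exponent_le hu (by linarith)
    _ ≤ π / 2 * u ^ ξ := le_mul_of_one_le_left (by positivity) (by linarith [two_le_pi])

lemma isTotallyComplex_of_isEmpty_ringHom {K : Type*} [Field K] (h : IsEmpty (K →+* ℝ)) :
    IsTotallyComplex K :=
  ⟨fun _ => not_isReal_iff_isComplex.mp fun hw => h.elim (embedding_of_isReal hw)⟩

lemma exists_embedding_norm_sq_eq_abs_norm {K : Type*} [Field K] [NumberField K]
    (hdeg : Module.finrank ℚ K = 2) (himag : IsEmpty (K →+* ℝ)) :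
    ∃ σ : K →+* ℂ, ∀ x : K, ‖σ x‖ ^ 2 = |(Algebra.norm ℚ x : ℝ)| := by
  have := isTotallyComplex_of_isEmpty_ringHom himag
  have hcard : Fintype.card (InfinitePlace K) = 1 := by
    have := IsTotallyComplex.finrank K
    rw [card_eq_nrRealPlaces_add_nrComplexPlaces, IsTotallyComplex.nrRealPlaces_eq_zero]
    omega
  obtain ⟨w, hw⟩ := Fintype.card_eq_one_iff.mp hcard
  refine ⟨w.embedding, fun x => ?_⟩
  have := prod_eq_abs_norm x
  rw [Fintype.prod_eq_single w fun v hv => absurd (hw v) hv, IsTotallyComplex.mult_eq] at this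
  rw [norm_embedding_eq, this]
  push_cast
  rfl

section NormEmbedding

variable {K : Type*} [Field K] [NumberField K] {σ : K →+* ℂ}

lemma absNorm_span_singleton_eq_norm_sq (hσ : ∀ x : K, ‖σ x‖ ^ 2 = |(Algebra.norm ℚ x : ℝ)|)
    (α : 𝓞 K) : (Ideal.absNorm (Ideal.span {α}) : ℝ) = ‖σ α‖ ^ 2 := by
  rw [hσ, Ideal.absNorm_span_singleton, ← Algebra.coe_norm_int, Nat.cast_natAbs, Int.cast_abs]
  push_cast
  rfl

lemma one_le_norm_sub (hσ : ∀ x : K, ‖σ x‖ ^ 2 = |(Algebra.norm ℚ x : ℝ)|) {α β : 𝓞 K}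
    (h : α ≠ β) : 1 ≤ ‖σ α - σ β‖ := by
  have hne : Ideal.absNorm (Ideal.span {α - β}) ≠ 0 := by
    simpa [Ideal.absNorm_eq_zero_iff, Ideal.span_singleton_eq_bot, sub_eq_zero] using h
  have h1 : (1 : ℝ) ≤ ‖σ (α - β : 𝓞 K)‖ ^ 2 := by
    rw [← absNorm_span_singleton_eq_norm_sq hσ]
    exact_mod_cast Nat.one_le_iff_ne_zero.mpr hne
  push_cast at h1
  rw [← map_sub]
  exact (one_le_sq_iff₀ (norm_nonneg _)).mp h1

lemma card_le_of_norm_sq_le (hσ : ∀ x : K, ‖σ x‖ ^ 2 = |(Algebra.norm ℚ x : ℝ)|)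
    (G : Finset (𝓞 K)) {x : ℝ} (hx : 1 ≤ x) (hG : ∀ α ∈ G, ‖σ α‖ ^ 2 ≤ x) :
    (#G : ℝ) ≤ 9 * x := by
  have hinj : Set.InjOn (fun α : 𝓞 K => σ α) G := fun α _ β _ h =>
    RingOfIntegers.coe_injective (σ.injective h)
  have hsqrt : 1 ≤ √x := one_le_sqrt.mpr hx
  have hpack := card_le_of_norm_le_of_one_le_dist (G.image fun α : 𝓞 K => σ α) (sqrt_nonneg x)
    (by
      simp only [Finset.forall_mem_image]
      exact fun α hα => le_sqrt_of_sq_le (hG α hα))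
    (by
      simp only [Finset.coe_image, Set.Pairwise, Set.forall_mem_image]
      exact fun α _ β _ h => by
        simpa [dist_eq_norm] using one_le_norm_sub hσ (ne_of_apply_ne (fun α : 𝓞 K => σ α) h))
  rw [Finset.card_image_of_injOn hinj] at hpack
  nlinarith [sq_sqrt (by linarith : (0 : ℝ) ≤ x)]

lemma sum_exp_neg_mul_norm_sq_le (hσ : ∀ x : K, ‖σ x‖ ^ 2 = |(Algebra.norm ℚ x : ℝ)|)
    (G : Finset (𝓞 K)) {t : ℝ} (ht : 0 < t) :
    ∑ α ∈ G, rexp (-(t * ‖σ α‖ ^ 2)) ≤ 9 * (1 + t) / t := by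
  have hfloor (α : 𝓞 K) : rexp (-(t * ‖σ α‖ ^ 2)) ≤ rexp (-t) ^ ⌊‖σ α‖ ^ 2⌋₊ := by
    rw [← exp_nat_mul, exp_le_exp]
    nlinarith [Nat.floor_le (sq_nonneg ‖σ α‖)]
  have hcard (m : ℕ) : (#{α ∈ G | ⌊‖σ ((α : 𝓞 K) : K)‖ ^ 2⌋₊ ≤ m} : ℝ) ≤ 9 * (m + 1) := by
    refine card_le_of_norm_sq_le hσ _ (x := m + 1) (by linarith [m.cast_nonneg (α := ℝ)])
      fun α hα => ?_
    have hm : (⌊‖σ α‖ ^ 2⌋₊ : ℝ) ≤ m := by exact_mod_cast (Finset.mem_filter.mp hα).2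
    linarith [Nat.lt_floor_add_one (‖σ α‖ ^ 2)]
  have hx1 : rexp (-t) < 1 := exp_lt_one_iff.mpr (neg_lt_zero.mpr ht)
  have hexp : rexp (-t) * (1 + t) ≤ 1 := by
    calc rexp (-t) * (1 + t) ≤ rexp (-t) * rexp t := by gcongr; linarith [add_one_le_exp t]
      _ = 1 := by rw [← exp_add, neg_add_cancel, exp_zero]
  calc ∑ α ∈ G, rexp (-(t * ‖σ α‖ ^ 2)) ≤ ∑ α ∈ G, rexp (-t) ^ ⌊‖σ α‖ ^ 2⌋₊ :=
        Finset.sum_le_sum fun α _ => hfloor α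
    _ ≤ 9 / (1 - rexp (-t)) :=
        sum_pow_le_of_card_le G _ (exp_pos _).le hx1 hcard
    _ ≤ 9 * (1 + t) / t := by
        rw [div_le_div_iff₀ (sub_pos.mpr hx1) ht]
        nlinarith

lemma sum_exp_neg_mul_absNorm_le [IsPrincipalIdealRing (𝓞 K)]
    (hσ : ∀ x : K, ‖σ x‖ ^ 2 = |(Algebra.norm ℚ x : ℝ)|) (F : Finset (Ideal (𝓞 K))) {t : ℝ}
    (ht : 0 < t) : ∑ a ∈ F, rexp (-(t * Ideal.absNorm a)) ≤ 9 * (1 + t) / t := by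
  let g (a : Ideal (𝓞 K)) : 𝓞 K := Submodule.IsPrincipal.generator a
  have hg (a : Ideal (𝓞 K)) : Ideal.span {g a} = a := Ideal.span_singleton_generator a
  calc ∑ a ∈ F, rexp (-(t * Ideal.absNorm a))
      = ∑ α ∈ F.image g, rexp (-(t * ‖σ α‖ ^ 2)) := by
        rw [Finset.sum_image fun a _ b _ h => by rw [← hg a, ← hg b, h]]
        refine Finset.sum_congr rfl fun a _ => ?_
        rw [← absNorm_span_singleton_eq_norm_sq hσ, hg]
    _ ≤ 9 * (1 + t) / t := sum_exp_neg_mul_norm_sq_le hσ _ ht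

end NormEmbedding

theorem gaussian_weight_tail_bound_general
    (K : Type*) [Field K] [NumberField K]
    (hdeg : Module.finrank ℚ K = 2)
    (himag : IsEmpty (K →+* ℝ))
    (hclass : NumberField.classNumber K = 1)
    (ξ : ℝ) (hξ : 0 < ξ) :
    ∃ c : ℝ, ∀ N : ℝ, 3 ≤ N → ∀ r : Ideal (𝓞 K), r ≠ ⊥ → (Ideal.absNorm r : ℝ) ≤ N / 2 →
      (∑' a : Ideal (𝓞 K),
          if a ≠ ⊥ ∧ N * (Real.log N) ^ ξ < (Ideal.absNorm (a * r) : ℝ) then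
            Real.pi * Real.exp (-Real.pi * (Ideal.absNorm (a * r) : ℝ) / N) else 0)
        ≤ c * (N / (Ideal.absNorm r : ℝ)) * Real.exp (-(Real.log N) ^ (ξ / 2)) := by
  obtain ⟨σ, hσ⟩ := exists_embedding_norm_sq_eq_abs_norm hdeg himag
  have := NumberField.classNumber_eq_one_iff.mp hclass
  refine ⟨36, fun N hN r hr hrN => ?_⟩
  have hN0 : 0 < N := by linarith
  have hlog : 1 ≤ Real.log N := by
    rw [le_log_iff_exp_le hN0]; linarith [exp_one_lt_three]
  set n : ℝ := (Ideal.absNorm r : ℝ)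
  have hn : 0 < n := by
    simpa [n, Nat.pos_iff_ne_zero, Ideal.absNorm_eq_zero_iff] using hr
  set t := π * n / (2 * N)
  have ht : 0 < t := by positivity
  have ht1 : t ≤ 1 := by
    rw [div_le_one (by positivity)]; nlinarith [pi_le_four]
  set E := rexp (-(π / 2 * Real.log N ^ ξ))
  have hterm (a : Ideal (𝓞 K)) :
      (if a ≠ ⊥ ∧ N * Real.log N ^ ξ < (Ideal.absNorm (a * r) : ℝ) then
        π * rexp (-π * (Ideal.absNorm (a * r) : ℝ) / N) else 0) ≤
        π * E * rexp (-(t * Ideal.absNorm a)) := by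
    split_ifs with h
    · rw [map_mul, Nat.cast_mul] at h ⊢
      rw [mul_assoc]
      gcongr
      have hsplit := exp_neg_pi_mul_div_le_of_mul_lt hN0 h.2
      rwa [show π * (Ideal.absNorm a * n) / (2 * N) = t * Ideal.absNorm a by ring] at hsplit
    · positivity
  refine tsum_le_of_sum_le' (by positivity) fun F => ?_
  calc _ ≤ ∑ a ∈ F, π * E * rexp (-(t * Ideal.absNorm a)) := Finset.sum_le_sum fun a _ => hterm a
    _ = π * E * ∑ a ∈ F, rexp (-(t * Ideal.absNorm a)) := (Finset.mul_sum ..).symm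
    _ ≤ π * E * (9 * (1 + t) / t) := by gcongr; exact sum_exp_neg_mul_absNorm_le hσ F ht
    _ ≤ π * E * (18 / t) := by gcongr; linarith
    _ = 36 * (N / n) * E := by simp only [t]; field_simp; ring
    _ ≤ 36 * (N / n) * rexp (-Real.log N ^ (ξ / 2)) := by
        gcongr; exact exp_neg_pi_half_mul_rpow_le hlog hξ.le

/-- **Tail bound for the Gaussian weight in imaginary quadratic fields:**
with `W(𝔫) = π exp(−π 𝒩(𝔫)/N)` and `Ñ = N (log N)^ξ`, for all `N ≥ 3` and nonzero
ideals `𝔯` with `𝒩(𝔯) ≤ N/2`, one has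
`∑_{𝔞∈ℐ, 𝒩(𝔞𝔯) > Ñ} W(𝔞𝔯) ≤ c (N/𝒩(𝔯)) exp(−(log N)^{ξ/2})`. -/
theorem gaussian_weight_tail_bound
    (K : Type*) [Field K] [NumberField K]
    (hdeg : Module.finrank ℚ K = 2)
    (himag : IsEmpty (K →+* ℝ))
    (hclass : NumberField.classNumber K = 1)
    (ξ : ℝ) (hξ : 0 < ξ) (hξ1 : ξ < 1) :
    ∃ c : ℝ, ∀ N : ℝ, 3 ≤ N → ∀ r : Ideal (𝓞 K), r ≠ ⊥ → (Ideal.absNorm r : ℝ) ≤ N / 2 →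
      (∑' a : Ideal (𝓞 K),
          if a ≠ ⊥ ∧ N * (Real.log N) ^ ξ < (Ideal.absNorm (a * r) : ℝ) then
            Real.pi * Real.exp (-Real.pi * (Ideal.absNorm (a * r) : ℝ) / N) else 0)
        ≤ c * (N / (Ideal.absNorm r : ℝ)) * Real.exp (-(Real.log N) ^ (ξ / 2)) :=
  gaussian_weight_tail_bound_general K hdeg himag hclass ξ hξ
end

section
/- Fix 𝒞 ∈ ℕ, a real number t > 1 and y ∈ ℝ. Let f(x) := (exp(−πx²) − exp(−2πx²))^𝒞 and F_y(x) := f(t^y·√x)·f(t^{−y}·√x) for x ≥ 0. Then for every complex s with Re(s) > 0, the Mellin transform of F_y satisfies ∫_0^∞ x^{s−1}·F_y(x) dx = π^{−s}·Γ(s)·∑_{a=𝒞}^{2𝒞} ∑_{b=𝒞}^{2𝒞} (−1)^{a+b} · binom(𝒞, 2𝒞−a) · binom(𝒞, 2𝒞−b) · (a·t^{2y} + b·t^{−2y})^{−s}. -/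
open MeasureTheory

/-!
With `q = exp(−πu²)` we have `f(u) = (q − q²)^𝒞`, so the binomial theorem writes `f(u)` as a
combination of `exp(−πau²)`, `𝒞 ≤ a ≤ 2𝒞`. Hence `F_y(x)` is a finite combination of the
exponentials `exp(−π(a t^{2y} + b t^{−2y}) x)` with positive rates, and the Mellin transform of
`exp(−πλx)` is `π^{−s} Γ(s) λ^{−s}`.
-/

open Finset Complex Real

theorem sub_sq_pow_eq_sum {R : Type*} [CommRing R] (q : R) (C : ℕ) :
    (q - q ^ 2) ^ C =
      ∑ a ∈ Icc C (2 * C), (-1) ^ (a + C) * (C.choose (2 * C - a) : R) * q ^ a := by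
  rw [sub_pow]
  refine sum_nbij' (fun m ↦ 2 * C - m) (fun a ↦ 2 * C - a) ?_ ?_ ?_ ?_ fun m hm ↦ ?_
  iterate 4 (intro m hm; simp only [mem_range, mem_Icc] at hm ⊢; omega)
  rw [mem_range] at hm
  rw [show 2 * C - (2 * C - m) = m by omega, show 2 * C - m + C = m + C + 2 * (C - m) by omega,
    show 2 * C - m = m + 2 * (C - m) by omega, pow_add q, pow_mul q, pow_add (-1 : R) (m + C),
    pow_mul (-1 : R), neg_one_sq, one_pow, mul_one]
  ring

theorem fwt_eq_sum (C : ℕ) (u : ℝ) :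
    fwt C u = ∑ a ∈ Icc C (2 * C),
      (-1) ^ (a + C) * (C.choose (2 * C - a) : ℝ) * rexp (-π * a * u ^ 2) := by
  have hsq : rexp (-2 * π * u ^ 2) = rexp (-π * u ^ 2) ^ 2 := by
    rw [← Real.exp_nat_mul]; ring_nf
  rw [fwt, hsq, sub_sq_pow_eq_sum]
  refine sum_congr rfl fun a _ ↦ ?_
  rw [← Real.exp_nat_mul]
  ring_nf

theorem rpow_mul_sqrt_sq {t : ℝ} (ht : 0 ≤ t) (y : ℝ) {x : ℝ} (hx : 0 ≤ x) :
    (t ^ y * √x) ^ 2 = t ^ (2 * y) * x := by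
  rw [mul_pow, sq_sqrt hx, ← rpow_natCast, ← rpow_mul ht, mul_comm y]
  norm_num

theorem fwt_mul_fwt_sqrt (C : ℕ) {t : ℝ} (ht : 0 ≤ t) (y : ℝ) {x : ℝ} (hx : 0 ≤ x) :
    fwt C (t ^ y * √x) * fwt C (t ^ (-y) * √x) =
      ∑ p ∈ Icc C (2 * C) ×ˢ Icc C (2 * C),
        (-1) ^ (p.1 + p.2) * (C.choose (2 * C - p.1) : ℝ) * C.choose (2 * C - p.2) *
          rexp (-π * (p.1 * t ^ (2 * y) + p.2 * t ^ (-(2 * y))) * x) := by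
  rw [fwt_eq_sum, fwt_eq_sum, sum_mul_sum, ← sum_product']
  refine sum_congr rfl fun p _ ↦ ?_
  have hsign : (-1 : ℝ) ^ (p.1 + C) * (-1) ^ (p.2 + C) = (-1) ^ (p.1 + p.2) := by
    rw [← pow_add, show p.1 + C + (p.2 + C) = p.1 + p.2 + 2 * C by ring, pow_add, pow_mul,
      neg_one_sq, one_pow, mul_one]
  have hexp : -π * (p.1 * t ^ (2 * y) + p.2 * t ^ (-(2 * y))) * x =
      -π * p.1 * (t ^ y * √x) ^ 2 + -π * p.2 * (t ^ (-y) * √x) ^ 2 := by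
    rw [rpow_mul_sqrt_sq ht _ hx, rpow_mul_sqrt_sq ht _ hx, mul_neg]
    ring
  rw [← hsign, hexp, Real.exp_add]
  ring

theorem mellin_sum_exp_neg_pi_mul {ι : Type*} (S : Finset ι) (c : ι → ℂ) {q : ι → ℝ}
    (hq : ∀ i ∈ S, 0 < q i) {s : ℂ} (hs : 0 < s.re) :
    mellin (fun x : ℝ ↦ ∑ i ∈ S, c i * rexp (-π * q i * x)) s =
      π ^ (-s) * Gamma s * ∑ i ∈ S, c i * (q i : ℂ) ^ (-s) := by
  have hmellin := hasSum_mellin_pi_mul (ι := S) (a := fun i ↦ c i) (q := fun i ↦ q i)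
    (F := fun x : ℝ ↦ ∑ i ∈ S, c i * rexp (-π * q i * x))
    (fun i ↦ Or.inr (hq i i.2)) hs (fun x _ ↦ S.hasSum fun i ↦ c i * rexp (-π * q i * x))
    Summable.of_finite
  rw [hmellin.unique (S.hasSum fun i ↦ π ^ (-s) * Gamma s * c i / (q i : ℂ) ^ s), mul_sum]
  refine sum_congr rfl fun i _ ↦ ?_
  rw [div_eq_mul_inv, ← cpow_neg]
  ring

/-- **Mellin transform of `F_y(x) = f(t^y √x) f(t^{−y} √x)`:** for `Re s > 0`,
`∫_0^∞ x^{s−1} F_y(x) dx = π^{−s} Γ(s) ∑_{a=𝒞}^{2𝒞} ∑_{b=𝒞}^{2𝒞} (−1)^{a+b}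
binom(𝒞,2𝒞−a) binom(𝒞,2𝒞−b) (a t^{2y} + b t^{−2y})^{−s}`. -/
theorem mellin_transform_Fy
    (C : ℕ) (hC : 0 < C) (t : ℝ) (ht : 1 < t) (y : ℝ) (s : ℂ) (hs : 0 < s.re) :
    (∫ x in Set.Ioi (0 : ℝ), (x : ℂ) ^ (s - 1) *
        ((fwt C (t ^ y * Real.sqrt x) * fwt C (t ^ (-y) * Real.sqrt x) : ℝ) : ℂ))
      = (Real.pi : ℂ) ^ (-s) * Complex.Gamma s *
        ∑ a ∈ Finset.Icc C (2*C), ∑ b ∈ Finset.Icc C (2*C),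
          (-1 : ℂ)^(a+b) * (C.choose (2*C - a)) * (C.choose (2*C - b)) *
            (((a : ℝ) * t ^ (2*y) + (b : ℝ) * t ^ (-(2*y)) : ℝ) : ℂ) ^ (-s) := by
  have ht0 : 0 < t := by linarith
  have hq : ∀ p ∈ Icc C (2 * C) ×ˢ Icc C (2 * C),
      0 < (p.1 : ℝ) * t ^ (2 * y) + p.2 * t ^ (-(2 * y)) := by
    intro p hp
    simp only [mem_product, mem_Icc] at hp
    have : (0 : ℝ) < p.1 := by exact_mod_cast hC.trans_le hp.1.1
    positivity
  rw [← sum_product', ← mellin_sum_exp_neg_pi_mul _ _ hq hs]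
  refine setIntegral_congr_fun measurableSet_Ioi fun x hx ↦ ?_
  rw [fwt_mul_fwt_sqrt C ht0.le y hx.le, smul_eq_mul]
  push_cast
  rfl
end
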